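/- Let N be even, let σ ∈ {−1,+1}^N satisfy Σ_i σ_i = 0, let W be a symmetric real N×N matrix with zero diagonal, and let w_in, w_out ≥ 0 satisfy w_in + w_out ≤ 2. Let EW := ((w_in + w_out)/2)·11ᵀ + ((w_in − w_out)/2)·σσᵀ − w_in·I. Define the diagonal matrix D by D_{ii} = −Σ_j W_{ij} σ_i σ_j, and set S := D + W. Then for every x ∈ ℝ^N with xᵀσ = 0 and ‖x‖₂ = 1, one has xᵀ S x ≥ min_i D_{ii} − ‖W − EW‖₂ − w_in, where ‖·‖₂ denotes the spectral (operator) norm. -/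

import Mathlib

open Matrix Finset

/-!
Split `S = D + (W - EW) + EW` and bound the three quadratic forms on a unit vector `x ⊥ σ`
separately: the diagonal part is an average of the `D i i` with weights `x i ^ 2`, hence at least
their minimum; the middle part is at least `-‖W - EW‖₂`; and since `x ⊥ σ` the rank-one `σσᵀ` term
of `EW` vanishes, leaving `((w_in + w_out) / 2) (∑ i, x i)² - w_in ≥ -w_in`.
-/

namespace Matrix

variable {n R : Type*}

theorem of_const_one_eq_vecMulVec [MulOneClass R] :
    (of fun _ _ => (1 : R) : Matrix n n R) = vecMulVec 1 1 := by
  ext i j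
  simp [vecMulVec_apply]

variable [Fintype n]

theorem iInf_le_dotProduct_diagonal_mulVec [DecidableEq n] (d : n → ℝ) {x : n → ℝ}
    (hx : x ⬝ᵥ x = 1) :
    ⨅ i, d i ≤ x ⬝ᵥ diagonal d *ᵥ x := by
  calc ⨅ i, d i = ∑ i, (⨅ j, d j) * (x i * x i) := by
        rw [← Finset.mul_sum, ← dotProduct, hx, mul_one]
    _ ≤ ∑ i, d i * (x i * x i) :=
        Finset.sum_le_sum fun i _ =>
          mul_le_mul_of_nonneg_right (ciInf_le (Finite.bddBelow_range d) i) (mul_self_nonneg _)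
    _ = x ⬝ᵥ diagonal d *ᵥ x := by
        simp only [mulVec_diagonal, dotProduct]
        exact Finset.sum_congr rfl fun i _ => by ring

theorem abs_dotProduct_mulVec_le_norm_toEuclideanCLM [DecidableEq n] (A : Matrix n n ℝ)
    (x : n → ℝ) :
    |x ⬝ᵥ A *ᵥ x| ≤ ‖toEuclideanCLM (𝕜 := ℝ) A‖ * (x ⬝ᵥ x) := by
  set y : EuclideanSpace ℝ n := WithLp.toLp 2 x
  have hA : x ⬝ᵥ A *ᵥ x = inner ℝ y (toEuclideanCLM (𝕜 := ℝ) A y) :=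
    (inner_toEuclideanCLM A y y).symm
  have hy : x ⬝ᵥ x = ‖y‖ ^ 2 := by
    rw [← real_inner_self_eq_norm_sq]
    rfl
  rw [hA, hy]
  calc |inner ℝ y (toEuclideanCLM (𝕜 := ℝ) A y)| ≤ ‖y‖ * ‖toEuclideanCLM (𝕜 := ℝ) A y‖ :=
        abs_real_inner_le_norm _ _
    _ ≤ ‖y‖ * (‖toEuclideanCLM (𝕜 := ℝ) A‖ * ‖y‖) := by
        gcongr
        exact ContinuousLinearMap.le_opNorm _ _
    _ = ‖toEuclideanCLM (𝕜 := ℝ) A‖ * ‖y‖ ^ 2 := by ring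

theorem dotProduct_vecMulVec_mulVec [CommSemiring R] (u v x : n → R) :
    x ⬝ᵥ vecMulVec u v *ᵥ x = (x ⬝ᵥ u) * (v ⬝ᵥ x) := by
  rw [vecMulVec_mulVec, op_smul_eq_smul, dotProduct_smul, smul_eq_mul, mul_comm]

end Matrix

theorem quadratic_form_lower_bound_disassortative_general
    (N : ℕ)
    (σ : Fin N → ℝ)
    (W : Matrix (Fin N) (Fin N) ℝ)
    (win wout : ℝ) (hwin : 0 ≤ win) (hwout : 0 ≤ wout)
    (EW : Matrix (Fin N) (Fin N) ℝ)
    (hEW : EW = ((win + wout) / 2) • (Matrix.of fun _ _ => (1 : ℝ))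
      + ((win - wout) / 2) • vecMulVec σ σ - win • (1 : Matrix (Fin N) (Fin N) ℝ))
    (D : Matrix (Fin N) (Fin N) ℝ)
    (hD : D = Matrix.diagonal (fun i => -∑ j, W i j * σ i * σ j))
    (S : Matrix (Fin N) (Fin N) ℝ)
    (hS : S = D + W)
    (x : Fin N → ℝ) (hxσ : x ⬝ᵥ σ = 0) (hx : ∑ i, x i ^ 2 = 1) :
    (⨅ i, D i i) - ‖Matrix.toEuclideanCLM (𝕜 := ℝ) (W - EW)‖ - win ≤ x ⬝ᵥ S.mulVec x := by
  have hxx : x ⬝ᵥ x = 1 := by simpa only [dotProduct, sq] using hx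
  have hdiag : ⨅ i, D i i ≤ x ⬝ᵥ D *ᵥ x := by
    subst hD
    simpa only [diagonal_apply_eq] using iInf_le_dotProduct_diagonal_mulVec _ hxx
  have hnoise := (abs_le.mp <| abs_dotProduct_mulVec_le_norm_toEuclideanCLM (W - EW) x).1
  rw [hxx, mul_one] at hnoise
  have hmean : x ⬝ᵥ EW *ᵥ x = (win + wout) / 2 * (x ⬝ᵥ 1) ^ 2 - win := by
    rw [hEW, of_const_one_eq_vecMulVec]
    simp only [sub_mulVec, add_mulVec, smul_mulVec, one_mulVec, dotProduct_sub, dotProduct_add,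
      dotProduct_smul, dotProduct_vecMulVec_mulVec, dotProduct_comm σ x, hxσ, hxx, one_dotProduct,
      dotProduct_one, smul_eq_mul]
    ring
  have hsplit : x ⬝ᵥ S *ᵥ x = x ⬝ᵥ D *ᵥ x + x ⬝ᵥ (W - EW) *ᵥ x + x ⬝ᵥ EW *ᵥ x := by
    rw [hS, sub_mulVec, add_mulVec, dotProduct_sub, dotProduct_add]
    ring
  have hmean_nonneg : 0 ≤ (win + wout) / 2 * (x ⬝ᵥ 1) ^ 2 := by positivity
  rw [hsplit, hmean]
  linarith

/-- disassortative case: for the dual certificate matrix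
`S = D + W` with `D_ii = −Σ_j W_ij σ_i σ_j`, every unit vector `x ⊥ σ`
satisfies `xᵀSx ≥ min_i D_ii − ‖W − EW‖₂ − w_in` (spectral norm). -/
theorem quadratic_form_lower_bound_disassortative
    (N : ℕ) (hN : Even N)
    (σ : Fin N → ℝ) (hσ : ∀ i, σ i = 1 ∨ σ i = -1) (hbal : ∑ i, σ i = 0)
    (W : Matrix (Fin N) (Fin N) ℝ) (hWsymm : W.IsSymm) (hWdiag : ∀ i, W i i = 0)
    (win wout : ℝ) (hwin : 0 ≤ win) (hwout : 0 ≤ wout) (hw2 : win + wout ≤ 2)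
    (EW : Matrix (Fin N) (Fin N) ℝ)
    (hEW : EW = ((win + wout) / 2) • (Matrix.of fun _ _ => (1 : ℝ))
      + ((win - wout) / 2) • vecMulVec σ σ - win • (1 : Matrix (Fin N) (Fin N) ℝ))
    (D : Matrix (Fin N) (Fin N) ℝ)
    (hD : D = Matrix.diagonal (fun i => -∑ j, W i j * σ i * σ j))
    (S : Matrix (Fin N) (Fin N) ℝ)
    (hS : S = D + W)
    (x : Fin N → ℝ) (hxσ : x ⬝ᵥ σ = 0) (hx : ∑ i, x i ^ 2 = 1) :
    (⨅ i, D i i) - ‖Matrix.toEuclideanCLM (𝕜 := ℝ) (W - EW)‖ - win ≤ x ⬝ᵥ S.mulVec x :=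
  quadratic_form_lower_bound_disassortative_general N σ W win wout hwin hwout EW hEW D hD S hS x hxσ
    hx
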